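/- Let {A_n} be a sequence of n×n symmetric matrices with nonnegative entries and zeros on the diagonal satisfying (BD) and (MF), fix (β, B) ∈ Θ, and let X be an observation from P_{n,β,B}. With b_i(x) := tanh(β m_i(x) + B), one has limsup_{n→∞} (1/n) E[ ( Σ_{i=1}^n (X_i − b_i(X)) )² ] < ∞, where E denotes expectation under P_{n,β,B}. -/

import Mathlib

open Filter

noncomputable section

/-- Spin configuration in `{-1,1}^n` encoded by a Boolean vector. -/
def spinVec (n : ℕ) (σ : Fin n → Bool) : Fin n → ℝ := fun i => if σ i then 1 else -1

/-- Local field `m_i(x) = ∑_j A i j * x j`. -/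
def mloc {n : ℕ} (A : Matrix (Fin n) (Fin n) ℝ) (x : Fin n → ℝ) (i : Fin n) : ℝ :=
  ∑ j, A i j * x j

/-- Average local field `m̄(x)`. -/
def mbar {n : ℕ} (A : Matrix (Fin n) (Fin n) ℝ) (x : Fin n → ℝ) : ℝ :=
  (1 / (n : ℝ)) * ∑ i, mloc A x i

/-- `T_n(x) = (1/n) ∑_i (m_i(x) - m̄(x))²`. -/
def Tstat {n : ℕ} (A : Matrix (Fin n) (Fin n) ℝ) (x : Fin n → ℝ) : ℝ :=
  (1 / (n : ℝ)) * ∑ i, (mloc A x i - mbar A x) ^ 2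

/-- Unnormalized Ising weight `exp((β/2) xᵀAx + B ∑ x_i)`. -/
def isingWt {n : ℕ} (A : Matrix (Fin n) (Fin n) ℝ) (β B : ℝ) (x : Fin n → ℝ) : ℝ :=
  Real.exp (β / 2 * ∑ i, ∑ j, A i j * x i * x j + B * ∑ i, x i)

/-- Probability of the event `E` under the Ising measure `P_{n,β,B}`. -/
def isingProb {n : ℕ} (A : Matrix (Fin n) (Fin n) ℝ) (β B : ℝ) (E : Set (Fin n → ℝ)) : ℝ :=
  (∑ σ : Fin n → Bool, E.indicator (isingWt A β B) (spinVec n σ)) /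
    (∑ σ : Fin n → Bool, isingWt A β B (spinVec n σ))

/-- Expectation of `f` under the Ising measure `P_{n,β,B}`. -/
def isingExp {n : ℕ} (A : Matrix (Fin n) (Fin n) ℝ) (β B : ℝ) (f : (Fin n → ℝ) → ℝ) : ℝ :=
  (∑ σ : Fin n → Bool, f (spinVec n σ) * isingWt A β B (spinVec n σ)) /
    (∑ σ : Fin n → Bool, isingWt A β B (spinVec n σ))

/-- Pseudo-likelihood equation `Q_n(β,B|x)`. -/
def Qfun {n : ℕ} (A : Matrix (Fin n) (Fin n) ℝ) (β B : ℝ) (x : Fin n → ℝ) : ℝ :=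
  ∑ i, mloc A x i * (x i - Real.tanh (β * mloc A x i + B))

/-- Pseudo-likelihood equation `R_n(β,B|x)`. -/
def Rfun {n : ℕ} (A : Matrix (Fin n) (Fin n) ℝ) (β B : ℝ) (x : Fin n → ℝ) : ℝ :=
  ∑ i, (x i - Real.tanh (β * mloc A x i + B))

/-- `b_i(x) = tanh(β m_i(x) + B)`. -/
def bvec {n : ℕ} (A : Matrix (Fin n) (Fin n) ℝ) (β B : ℝ) (x : Fin n → ℝ) : Fin n → ℝ :=
  fun i => Real.tanh (β * mloc A x i + B)

/-- `f_n(y) = (β/2) yᵀAy + B ∑ y_i`. -/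
def fN {n : ℕ} (A : Matrix (Fin n) (Fin n) ℝ) (β B : ℝ) (y : Fin n → ℝ) : ℝ :=
  β / 2 * ∑ i, ∑ j, A i j * y i * y j + B * ∑ i, y i

/-- Entropy term `I(y)` (with `0 log 0 = 0`, as `Real.log 0 = 0`). -/
def entI {n : ℕ} (y : Fin n → ℝ) : ℝ :=
  ∑ i, ((1 + y i) / 2 * Real.log ((1 + y i) / 2) + (1 - y i) / 2 * Real.log ((1 - y i) / 2))

/-!
Flipping spin `i` leaves `m_i` unchanged (as `A i i = 0`) and multiplies the Ising weight by
`exp (-2 x_i (β m_i + B))`, so `(x_i - b_i(x))` times the weight is odd under the flip; this is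
`E[X_i | X_j, j ≠ i] = b_i(X)`. Pairing each configuration with its flip therefore gives
`2 E[(X_i - b_i) g(X)] = E[(X_i - b_i) (g(X) - g(Xⁱ))]` for every `g`, where `Xⁱ` is `X` with
spin `i` flipped. For `g = R := ∑_j (X_j - b_j)` a single flip changes `R` by at most
`2 (1 + |β| ∑_j A i j)`, because `tanh` is 1-Lipschitz, so
`E[R²] = ∑_i E[(X_i - b_i) R] ≤ n (2 + 2 |β| γ)`.
-/

namespace Real

theorem hasDerivAt_tanh (t : ℝ) : HasDerivAt tanh (1 / cosh t ^ 2) t := by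
  have h := (hasDerivAt_sinh t).div (hasDerivAt_cosh t) (cosh_pos t).ne'
  rwa [← sq, ← sq, cosh_sq_sub_sinh_sq, show sinh / cosh = tanh from
    funext fun x => (tanh_eq_sinh_div_cosh x).symm] at h

theorem lipschitzWith_one_tanh : LipschitzWith 1 tanh := by
  refine lipschitzWith_of_nnnorm_deriv_le (fun t => (hasDerivAt_tanh t).differentiableAt)
    fun t => ?_
  rw [(hasDerivAt_tanh t).deriv, ← NNReal.coe_le_coe, coe_nnnorm, norm_of_nonneg (by positivity),
    NNReal.coe_one, div_le_one (by positivity)]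
  nlinarith [one_le_cosh t]

theorem abs_tanh_sub_tanh_le (a b : ℝ) : |tanh a - tanh b| ≤ |a - b| := by
  simpa [dist_eq] using lipschitzWith_one_tanh.dist_le_mul a b

theorem abs_sub_tanh_le_two {s : ℝ} (hs : |s| = 1) (t : ℝ) : |s - tanh t| ≤ 2 := by
  linarith [abs_sub s (tanh t), abs_tanh_lt_one t]

theorem neg_sub_tanh_mul_exp {s : ℝ} (hs : s = 1 ∨ s = -1) (t : ℝ) :
    (-s - tanh t) * exp (-(2 * s * t)) = -(s - tanh t) := by
  have hc := (cosh_pos t).ne'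
  rw [tanh_eq_sinh_div_cosh]
  rcases hs with rfl | rfl
  · rw [show -(2 * 1 * t) = -t + -t by ring, exp_add, ← cosh_sub_sinh]
    field_simp
    linear_combination -cosh_sq_sub_sinh_sq t
  · rw [show -(2 * -1 * t) = t + t by ring, exp_add, ← cosh_add_sinh]
    field_simp
    linear_combination (cosh t + sinh t) * cosh_sq_sub_sinh_sq t

end Real

theorem two_mul_sum_mul_eq_sum_mul_sub_comp {α R : Type*} [Fintype α] [CommRing R]
    {F : α → α} (hF : Function.Involutive F) {φ : α → R} (hφ : ∀ a, φ (F a) = -φ a)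
    (g : α → R) : 2 * ∑ a, φ a * g a = ∑ a, φ a * (g a - g (F a)) := by
  have h : ∑ a, φ a * g a = -∑ a, φ a * g (F a) := by
    rw [← hF.bijective.sum_comp (fun a => φ a * g a), ← Finset.sum_neg_distrib]
    simp only [hφ, neg_mul]
  simp only [mul_sub, Finset.sum_sub_distrib]
  linear_combination h

theorem sum_update_mul {ι R : Type*} [Fintype ι] [DecidableEq ι] [CommRing R] (x : ι → R)
    (i : ι) (v : R) (g : ι → R) :
    ∑ k, Function.update x i v k * g k = ∑ k, x k * g k + (v - x i) * g i := by
  rw [← Finset.sum_erase_add _ _ (Finset.mem_univ i),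
    ← Finset.sum_erase_add _ _ (Finset.mem_univ i),
    Finset.sum_congr rfl fun k hk => by rw [Function.update_of_ne (Finset.ne_of_mem_erase hk)],
    Function.update_self]
  ring

section Ising

variable {n : ℕ}

def flipSpin (i : Fin n) (σ : Fin n → Bool) : Fin n → Bool := Function.update σ i (!σ i)

theorem flipSpin_involutive (i : Fin n) : Function.Involutive (flipSpin i) := by
  intro σ
  ext j
  rcases eq_or_ne j i with rfl | h <;> simp [flipSpin, *]

theorem spinVec_eq_one_or_neg_one (σ : Fin n → Bool) (i : Fin n) :
    spinVec n σ i = 1 ∨ spinVec n σ i = -1 := by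
  unfold spinVec; split_ifs <;> simp

theorem abs_spinVec (σ : Fin n → Bool) (i : Fin n) : |spinVec n σ i| = 1 := by
  rcases spinVec_eq_one_or_neg_one σ i with h | h <;> simp [h]

theorem spinVec_flipSpin (i : Fin n) (σ : Fin n → Bool) :
    spinVec n (flipSpin i σ) = Function.update (spinVec n σ) i (-spinVec n σ i) := by
  ext j
  rcases eq_or_ne j i with rfl | h
  · cases h : σ j <;> simp [spinVec, flipSpin, h]
  · simp [spinVec, flipSpin, h]

variable {A : Matrix (Fin n) (Fin n) ℝ} (β B : ℝ)

theorem mloc_update (x : Fin n → ℝ) (i : Fin n) (v : ℝ) (j : Fin n) :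
    mloc A (Function.update x i v) j = mloc A x j + A j i * (v - x i) := by
  simp only [mloc, mul_comm (A j _), sum_update_mul]

theorem sum_sum_mul_eq_sum_mul_mloc (x : Fin n → ℝ) :
    ∑ k, ∑ l, A k l * x k * x l = ∑ k, x k * mloc A x k := by
  simp only [mloc, Finset.mul_sum]
  exact Finset.sum_congr rfl fun k _ => Finset.sum_congr rfl fun l _ => by ring

theorem sum_sum_mul_update (hA : A.IsSymm) {i : Fin n} (hii : A i i = 0)
    (x : Fin n → ℝ) (v : ℝ) :
    ∑ k, ∑ l, A k l * Function.update x i v k * Function.update x i v l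
      = ∑ k, ∑ l, A k l * x k * x l + 2 * (v - x i) * mloc A x i := by
  have hcol : ∑ k, x k * A k i = mloc A x i :=
    Finset.sum_congr rfl fun k _ => by rw [hA.apply k i, mul_comm]
  simp only [sum_sum_mul_eq_sum_mul_mloc, mloc_update, mul_add, Finset.sum_add_distrib,
    sum_update_mul x i v, ← mul_assoc, ← Finset.sum_mul]
  rw [hcol, hii]
  ring

theorem isingWt_update (hA : A.IsSymm) {i : Fin n} (hii : A i i = 0) (x : Fin n → ℝ)
    (v : ℝ) : isingWt A β B (Function.update x i v)
      = isingWt A β B x * Real.exp ((v - x i) * (β * mloc A x i + B)) := by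
  rw [isingWt, isingWt, ← Real.exp_add, sum_sum_mul_update hA hii,
    show ∑ k, Function.update x i v k = ∑ k, x k + (v - x i) by
      simpa using sum_update_mul x i v fun _ => 1]
  ring_nf

theorem isingWt_pos (x : Fin n → ℝ) : 0 < isingWt A β B x := Real.exp_pos _

variable (A) in
def residualWt (i : Fin n) (x : Fin n → ℝ) : ℝ := (x i - bvec A β B x i) * isingWt A β B x

theorem residualWt_flipSpin (hA : A.IsSymm) {i : Fin n} (hii : A i i = 0) (σ : Fin n → Bool) :
    residualWt A β B i (spinVec n (flipSpin i σ)) = -residualWt A β B i (spinVec n σ) := by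
  set x := spinVec n σ
  have hm : mloc A (spinVec n (flipSpin i σ)) i = mloc A x i := by
    rw [spinVec_flipSpin, mloc_update, hii, zero_mul, add_zero]
  rw [residualWt, residualWt, bvec, bvec, hm, spinVec_flipSpin, isingWt_update β B hA hii,
    Function.update_self,
    show (-x i - x i) * (β * mloc A x i + B) = -(2 * x i * (β * mloc A x i + B)) by ring]
  linear_combination isingWt A β B x
    * Real.neg_sub_tanh_mul_exp (spinVec_eq_one_or_neg_one σ i) (β * mloc A x i + B)

theorem two_mul_sum_residualWt_mul (hA : A.IsSymm) {i : Fin n} (hii : A i i = 0)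
    (g : (Fin n → ℝ) → ℝ) :
    2 * ∑ σ, residualWt A β B i (spinVec n σ) * g (spinVec n σ)
      = ∑ σ, residualWt A β B i (spinVec n σ)
        * (g (spinVec n σ) - g (spinVec n (flipSpin i σ))) :=
  two_mul_sum_mul_eq_sum_mul_sub_comp (flipSpin_involutive i)
    (residualWt_flipSpin β B hA hii) fun σ => g (spinVec n σ)

theorem abs_Rfun_update_sub_le (x : Fin n → ℝ) (i : Fin n) (v : ℝ) :
    |Rfun A β B (Function.update x i v) - Rfun A β B x|
      ≤ |v - x i| * (1 + |β| * ∑ j, |A j i|) := by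
  set y := Function.update x i v
  have hterm : ∀ j, |(y j - bvec A β B y j) - (x j - bvec A β B x j)|
      ≤ |y j - x j| + |β| * |A j i| * |v - x i| := by
    intro j
    calc _ = |(y j - x j) + (bvec A β B x j - bvec A β B y j)| := by
          congr 1; ring
      _ ≤ |y j - x j| + |(β * mloc A x j + B) - (β * mloc A y j + B)| :=
          (abs_add_le _ _).trans (add_le_add le_rfl (Real.abs_tanh_sub_tanh_le _ _))
      _ = |y j - x j| + |β| * |A j i| * |v - x i| := by
          rw [mloc_update, show β * mloc A x j + B - (β * (mloc A x j + A j i * (v - x i)) + B)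
            = -(β * A j i * (v - x i)) by ring, abs_neg, abs_mul, abs_mul]
  have hsingle : ∑ j, |y j - x j| = |v - x i| := by
    rw [Finset.sum_eq_single i (fun j _ hj => by simp [y, Function.update_of_ne hj])
      (by simp)]
    simp only [y, Function.update_self]
  calc _ = |∑ j, ((y j - bvec A β B y j) - (x j - bvec A β B x j))| := by
        rw [Rfun, Rfun, ← Finset.sum_sub_distrib]
        rfl
    _ ≤ ∑ j, (|y j - x j| + |β| * |A j i| * |v - x i|) :=
        (Finset.abs_sum_le_sum_abs _ _).trans (Finset.sum_le_sum fun j _ => hterm j)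
    _ = _ := by
        rw [Finset.sum_add_distrib, hsingle, ← Finset.sum_mul, ← Finset.mul_sum]
        ring

theorem sum_residualWt_mul_Rfun_le (hA : A.IsSymm) {i : Fin n} (hii : A i i = 0) :
    ∑ σ, residualWt A β B i (spinVec n σ) * Rfun A β B (spinVec n σ)
      ≤ 2 * (1 + |β| * ∑ j, |A j i|) * ∑ σ, isingWt A β B (spinVec n σ) := by
  set c := 1 + |β| * ∑ j, |A j i|
  have hterm : ∀ σ, residualWt A β B i (spinVec n σ)
      * (Rfun A β B (spinVec n σ) - Rfun A β B (spinVec n (flipSpin i σ)))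
      ≤ 2 * (2 * c) * isingWt A β B (spinVec n σ) := by
    intro σ
    set x := spinVec n σ
    set x' := spinVec n (flipSpin i σ)
    have hR : |Rfun A β B x - Rfun A β B x'| ≤ 2 * c := by
      rw [show x' = Function.update x i (-x i) from spinVec_flipSpin i σ, abs_sub_comm]
      refine (abs_Rfun_update_sub_le β B x i _).trans_eq ?_
      rw [show -x i - x i = -(2 * x i) by ring, abs_neg, abs_mul, abs_spinVec, abs_two, mul_one]
    calc _ ≤ |residualWt A β B i x * (Rfun A β B x - Rfun A β B x')| := le_abs_self _
      _ = |x i - bvec A β B x i| * |Rfun A β B x - Rfun A β B x'| * isingWt A β B x := by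
          rw [residualWt, abs_mul, abs_mul, abs_of_pos (isingWt_pos β B x)]
          ring
      _ ≤ 2 * (2 * c) * isingWt A β B x :=
          mul_le_mul_of_nonneg_right (mul_le_mul (Real.abs_sub_tanh_le_two (abs_spinVec σ i) _)
            hR (abs_nonneg _) zero_le_two) (isingWt_pos β B x).le
  have hsum := Finset.sum_le_sum fun σ (_ : σ ∈ Finset.univ) => hterm σ
  rw [← two_mul_sum_residualWt_mul β B hA hii, ← Finset.mul_sum] at hsum
  linarith

theorem isingExp_Rfun_sq_le (hA : A.IsSymm) (hA0 : ∀ i j, 0 ≤ A i j)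
    (hdiag : ∀ i, A i i = 0) {γ : ℝ} (hγ : ∀ i, ∑ j, A i j ≤ γ) :
    isingExp A β B (fun x => Rfun A β B x ^ 2) ≤ n * (2 + 2 * |β| * γ) := by
  have hZ : 0 < ∑ σ : Fin n → Bool, isingWt A β B (spinVec n σ) :=
    Finset.sum_pos (fun σ _ => isingWt_pos β B _) Finset.univ_nonempty
  have hcol : ∀ i, ∑ j, |A j i| ≤ γ := fun i => by
    simpa only [abs_of_nonneg (hA0 _ _), hA.apply] using hγ i
  rw [isingExp, div_le_iff₀ hZ]
  calc _ = ∑ i, ∑ σ, residualWt A β B i (spinVec n σ) * Rfun A β B (spinVec n σ) := by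
        rw [Finset.sum_comm]
        refine Finset.sum_congr rfl fun σ _ => ?_
        rw [sq, mul_right_comm]
        nth_rw 1 [Rfun]
        rw [Finset.sum_mul, Finset.sum_mul]
        rfl
    _ ≤ ∑ _i : Fin n, 2 * (1 + |β| * γ) * ∑ σ, isingWt A β B (spinVec n σ) :=
        Finset.sum_le_sum fun i _ =>
          (sum_residualWt_mul_Rfun_le β B hA (hdiag i)).trans (by gcongr; exact hcol i)
    _ = _ := by
        rw [Finset.sum_const, Finset.card_univ, Fintype.card_fin, nsmul_eq_mul]
        ring

end Ising

theorem stmt13_general (A : (n : ℕ) → Matrix (Fin n) (Fin n) ℝ)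
    (hsymm : ∀ n, (A n).IsSymm)
    (hnonneg : ∀ n, ∀ i j : Fin n, 0 ≤ A n i j)
    (hdiag : ∀ n, ∀ i : Fin n, A n i i = 0)
    (hBD : ∃ γ : ℝ, ∀ n, ∀ i : Fin n, (∑ j, A n i j) ≤ γ)
    (β B : ℝ) :
    IsBoundedUnder (· ≤ ·) atTop (fun n : ℕ => (1 / (n : ℝ)) * isingExp (A n) β B
      (fun x => (∑ i, (x i - bvec (A n) β B x i)) ^ 2)) := by
  obtain ⟨γ, hγ⟩ := hBD
  refine ⟨2 + 2 * |β| * γ, eventually_map.2 ?_⟩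
  filter_upwards [eventually_ne_atTop 0] with n hn
  calc _ ≤ 1 / (n : ℝ) * (n * (2 + 2 * |β| * γ)) :=
        mul_le_mul_of_nonneg_left
          (isingExp_Rfun_sq_le β B (hsymm n) (hnonneg n) (hdiag n) (hγ n)) (by positivity)
    _ = 2 + 2 * |β| * γ := by field_simp

/-- `limsup (1/n) E[(∑ᵢ (Xᵢ - bᵢ(X)))²] < ∞`. -/
theorem stmt13 (A : (n : ℕ) → Matrix (Fin n) (Fin n) ℝ)
    (hsymm : ∀ n, (A n).IsSymm)
    (hnonneg : ∀ n, ∀ i j : Fin n, 0 ≤ A n i j)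
    (hdiag : ∀ n, ∀ i : Fin n, A n i i = 0)
    (hBD : ∃ γ : ℝ, ∀ n, ∀ i : Fin n, (∑ j, A n i j) ≤ γ)
    (hMF : Tendsto (fun n : ℕ => (1 / (n : ℝ)) * ∑ i, ∑ j, (A n i j) ^ 2) atTop (nhds 0))
    (β B : ℝ) (hβ : 0 < β) (hB : B ≠ 0) :
    IsBoundedUnder (· ≤ ·) atTop (fun n : ℕ => (1 / (n : ℝ)) * isingExp (A n) β B
      (fun x => (∑ i, (x i - bvec (A n) β B x i)) ^ 2)) :=
  stmt13_general A hsymm hnonneg hdiag hBD β B
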